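/- arXiv:math/9612222 — 4 statements merged into one kernel-verified Lean document; each statement's English description precedes it below -/
import Mathlib

section
/- Let Γ be a countable group (written additively) and let Ŷ = Y^Γ be the product of copies of the circle Y = ℝ/ℤ, with the shift action S^β(ŷ)[γ] = ŷ[γ+β]. Let •SIM be the set of shift-invariant Borel probability measures on Ŷ, with the weak-* topology. Then SIM — the set of those μ̂ ∈ •SIM whose one-dimensional marginal Marg[μ̂] (the pushforward of μ̂ under evaluation at the identity coordinate 0 ∈ Γ) is nonatomic and has full support — is a comeager subset of •SIM. -/
open MeasureTheory

noncomputable section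

/-- The shift action of `β : Γ` on `Ŷ = Y^Γ`: `(S^β yhat)[γ] = yhat[γ + β]`. -/
def shiftMap {Γ : Type*} [AddGroup Γ] (β : Γ) (yhat : Γ → AddCircle (1 : ℝ)) :
    Γ → AddCircle (1 : ℝ) :=
  fun γ => yhat (γ + β)

/-- A Borel probability measure on `Ŷ = Y^Γ` is a *sim* if it is invariant under the
shift `S^β` for every `β : Γ`. -/
def IsSim {Γ : Type*} [AddGroup Γ] (μ : ProbabilityMeasure (Γ → AddCircle (1 : ℝ))) : Prop :=
  ∀ β : Γ, μ.toMeasure.map (shiftMap β) = μ.toMeasure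

/-- The one-dimensional marginal of a measure on `Ŷ = Y^Γ`: its pushforward under
evaluation at the identity coordinate `0 : Γ`. -/
def Marg {Γ : Type*} [AddGroup Γ] (μ : ProbabilityMeasure (Γ → AddCircle (1 : ℝ))) :
    Measure (AddCircle (1 : ℝ)) :=
  μ.toMeasure.map (fun yhat => yhat 0)

/-- A Borel probability measure on the circle is *good* if it is nonatomic and has
full support. -/
def IsGoodMeasure (ν : Measure (AddCircle (1 : ℝ))) : Prop :=
  (∀ y : AddCircle (1 : ℝ), ν {y} = 0) ∧
    ∀ V : Set (AddCircle (1 : ℝ)), IsOpen V → V.Nonempty → 0 < ν V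

/-!
Goodness of the marginal is a Gδ condition in the weak-* topology. By the portmanteau theorem
`ν ↦ ν U` is lower semicontinuous for open `U`, which handles full support through a countable
basis, and `(ν, y) ↦ ν {y}` is upper semicontinuous, so by compactness of the circle the measures
all of whose atoms are smaller than `1 / n` form an open set. The marginal map is continuous, so
the good sims form a Gδ subset of `•SIM`.

They are also dense: adding one common wrapped-Gaussian phase of width `δ` to all coordinates
commutes with the shift, replaces the marginal by its convolution with a nonatomic measure of full
support, and tends to the original sim as `δ → 0`. A dense Gδ set is comeager.
-/

open Measure Set Filter Topology ProbabilityTheory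
open scoped ENNReal

namespace MeasureTheory.Measure

variable {G : Type*} [AddGroup G] [MeasurableSpace G] [MeasurableAdd₂ G]

theorem conv_apply (μ ν : Measure G) [SFinite ν] {s : Set G} (hs : MeasurableSet s) :
    (μ ∗ ν) s = ∫⁻ x, ν ((x + ·) ⁻¹' s) ∂μ := by
  rw [conv, map_apply measurable_add hs, prod_apply (measurable_add hs)]
  rfl

theorem conv_map_eq_map_prod {H : Type*} [MeasurableSpace H] (μ : Measure G) (ν : Measure H)
    [SFinite μ] [SFinite ν] {g : H → G} (hg : Measurable g) :
    μ ∗ ν.map g = (μ.prod ν).map (fun p ↦ p.1 + g p.2) := by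
  have h := map_prod_map μ ν measurable_id hg
  rw [map_id] at h
  rw [conv, h, map_map measurable_add (measurable_id.prodMap hg)]
  rfl

instance nullSingletonClass_conv [MeasurableSingletonClass G] (μ ν : Measure G) [SFinite ν]
    [NullSingletonClass ν] : NullSingletonClass (μ ∗ ν) where
  measure_singleton y := by
    rw [conv_apply μ ν (measurableSet_singleton y)]
    simp [preimage_add_left_singleton]

instance isOpenPosMeasure_conv [TopologicalSpace G] [IsTopologicalAddGroup G]
    [OpensMeasurableSpace G] (μ ν : Measure G) [NeZero μ] [SFinite ν] [IsOpenPosMeasure ν] :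
    IsOpenPosMeasure (μ ∗ ν) where
  open_pos U hU hne := by
    have hpos : ∀ x, 0 < ν ((x + ·) ⁻¹' U) := fun x ↦
      (hU.preimage (continuous_const_add x)).measure_pos ν (by
        obtain ⟨y, hy⟩ := hne
        exact ⟨-x + y, by simpa using hy⟩)
    rw [conv_apply μ ν hU.measurableSet]
    intro h
    have hmeas : Measurable fun x ↦ ν ((x + ·) ⁻¹' U) :=
      measurable_measure_prodMk_left (measurable_add hU.measurableSet)
    rw [lintegral_eq_zero_iff hmeas] at h
    have : ∀ᵐ x ∂μ, False := h.mono fun x hx ↦ (hpos x).ne' hx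
    exact NeZero.ne μ (ae_eq_bot.mp (eventually_false_iff_eq_bot.mp this))

end MeasureTheory.Measure

namespace MeasureTheory.ProbabilityMeasure

variable {X : Type*} [MeasurableSpace X]

section Semicontinuity

variable [TopologicalSpace X] [OpensMeasurableSpace X] [HasOuterApproxClosed X]

theorem lowerSemicontinuous_measure_of_isOpen {U : Set X} (hU : IsOpen U) :
    LowerSemicontinuous fun ν : ProbabilityMeasure X ↦ (ν : Measure X) U := fun ν _ hc ↦
  eventually_lt_of_lt_liminf (hc.trans_le (le_liminf_measure_open_of_tendsto tendsto_id hU))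

theorem upperSemicontinuous_measure_of_isClosed {F : Set X} (hF : IsClosed F) :
    UpperSemicontinuous fun ν : ProbabilityMeasure X ↦ (ν : Measure X) F := fun ν _ hc ↦
  eventually_lt_of_limsup_lt ((limsup_measure_closed_le_of_tendsto tendsto_id hF).trans_lt hc)

theorem isGδ_setOf_forall_isOpen_measure_pos [SecondCountableTopology X] :
    IsGδ {ν : ProbabilityMeasure X | ∀ U, IsOpen U → U.Nonempty → 0 < (ν : Measure X) U} := by
  obtain ⟨B, hBc, hBne, hB⟩ := TopologicalSpace.exists_countable_basis X
  convert IsGδ.biInter_of_isOpen hBc fun U hU ↦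
    (lowerSemicontinuous_measure_of_isOpen (hB.isOpen hU)).isOpen_preimage 0 using 1
  ext ν
  simp only [mem_ofPred_eq, mem_iInter, mem_preimage, mem_Ioi]
  refine ⟨fun h U hU ↦ h U (hB.isOpen hU) (nonempty_iff_ne_empty.2 (ne_of_mem_of_not_mem hU hBne)),
    fun h U hU ⟨x, hx⟩ ↦ ?_⟩
  obtain ⟨V, hVB, hxV, hVU⟩ := hB.exists_subset_of_mem_open hx hU
  exact (h V hVB).trans_le (measure_mono hVU)

end Semicontinuity

section Atoms

variable [MetricSpace X] [OpensMeasurableSpace X]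

theorem upperSemicontinuous_measure_singleton :
    UpperSemicontinuous fun p : ProbabilityMeasure X × X ↦ (p.1 : Measure X) {p.2} := by
  rintro ⟨ν, y⟩ c hc
  have hthick : Tendsto (fun r ↦ (ν : Measure X) (Metric.cthickening r {y})) (𝓝[>] 0)
      (𝓝 ((ν : Measure X) {y})) :=
    (tendsto_measure_cthickening_of_isClosed ⟨1, one_pos, measure_ne_top _ _⟩
      isClosed_singleton).mono_left nhdsWithin_le_nhds
  obtain ⟨r, hrc, hr⟩ := ((hthick.eventually (gt_mem_nhds hc)).and self_mem_nhdsWithin).exists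
  filter_upwards [(upperSemicontinuous_measure_of_isClosed Metric.isClosed_cthickening ν c
    hrc).prod_nhds (Metric.closedBall_mem_nhds y hr)] with ⟨ν', y'⟩ ⟨hν', hy'⟩
  exact (measure_mono (singleton_subset_iff.2
    (Metric.mem_cthickening_of_dist_le y' y r {y} rfl hy'))).trans_lt hν'

theorem isOpen_setOf_forall_measure_singleton_lt [CompactSpace X] (c : ℝ≥0∞) :
    IsOpen {ν : ProbabilityMeasure X | ∀ y, (ν : Measure X) {y} < c} := by
  have hclosed := (isClosedMap_fst_of_compactSpace _
    ((upperSemicontinuous_measure_singleton (X := X)).isClosed_preimage c))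
  convert hclosed.isOpen_compl using 1
  ext ν
  simp

theorem isGδ_setOf_forall_measure_singleton_eq_zero [CompactSpace X] :
    IsGδ {ν : ProbabilityMeasure X | ∀ y, (ν : Measure X) {y} = 0} := by
  convert IsGδ.iInter_of_isOpen fun n : ℕ ↦
    isOpen_setOf_forall_measure_singleton_lt (X := X) (n : ℝ≥0∞)⁻¹ using 1
  ext ν
  simp only [mem_ofPred_eq, mem_iInter]
  refine ⟨fun h n y ↦ by simp [h y], fun h y ↦ ?_⟩
  by_contra hy
  obtain ⟨n, hn⟩ := ENNReal.exists_inv_nat_lt hy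
  exact (h n y).not_gt hn

end Atoms

end MeasureTheory.ProbabilityMeasure

theorem AddCircle.countable_preimage_coe_singleton (T : ℝ) (y : AddCircle T) :
    ((↑) ⁻¹' {y} : Set ℝ).Countable := by
  obtain ⟨x, rfl⟩ := QuotientAddGroup.mk_surjective y
  refine (countable_range fun k : ℤ ↦ x + k • T).mono fun t ht ↦ ?_
  obtain ⟨k, hk⟩ := AddSubgroup.mem_zmultiples_iff.1 (QuotientAddGroup.eq.1 ht.symm)
  exact ⟨k, show x + k • T = t by rw [hk]; abel⟩

def wrappedGaussian (T δ : ℝ) : Measure (AddCircle T) :=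
  (gaussianReal 0 1).map fun t ↦ ((δ * t : ℝ) : AddCircle T)

section WrappedGaussian

variable {T δ : ℝ}

instance : IsProbabilityMeasure (wrappedGaussian T δ) :=
  isProbabilityMeasure_map (by fun_prop)

theorem nullSingletonClass_wrappedGaussian (hδ : δ ≠ 0) :
    NullSingletonClass (wrappedGaussian T δ) where
  measure_singleton y := by
    have : NullSingletonClass (gaussianReal 0 1) := by
      rw [gaussianReal_of_var_ne_zero 0 one_ne_zero]; infer_instance
    rw [wrappedGaussian, map_apply (by fun_prop) (measurableSet_singleton y)]
    exact ((AddCircle.countable_preimage_coe_singleton T y).preimage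
      (mul_right_injective₀ hδ)).measure_zero _

theorem isOpenPosMeasure_wrappedGaussian (hδ : δ ≠ 0) :
    IsOpenPosMeasure (wrappedGaussian T δ) :=
  have : IsOpenPosMeasure (gaussianReal 0 1) :=
    (gaussianReal_absolutelyContinuous' 0 one_ne_zero).isOpenPosMeasure
  Continuous.isOpenPosMeasure_map (by fun_prop) fun y ↦ by
    obtain ⟨x, rfl⟩ := QuotientAddGroup.mk_surjective y
    exact ⟨x / δ, by simp [mul_div_cancel₀ x hδ]⟩

end WrappedGaussian

theorem Pi.measurable_constAddMonoidHom {ι α : Type*} [AddZeroClass α] [MeasurableSpace α] :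
    Measurable (Pi.constAddMonoidHom ι α) :=
  measurable_pi_lambda _ fun _ ↦ measurable_id

section DiagonalSmoothing

variable {ι : Type*} {T : ℝ}

def diagonalSmoothing (μ : Measure (ι → AddCircle T)) (δ : ℝ) : Measure (ι → AddCircle T) :=
  μ ∗ (wrappedGaussian T δ).map (Pi.constAddMonoidHom ι (AddCircle T))

instance (μ : Measure (ι → AddCircle T)) [IsProbabilityMeasure μ] (δ : ℝ) :
    IsProbabilityMeasure (diagonalSmoothing μ δ) := by
  have := isProbabilityMeasure_map (μ := wrappedGaussian T δ)
    (Pi.measurable_constAddMonoidHom (ι := ι)).aemeasurable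
  exact probabilitymeasure_of_probabilitymeasures_conv _ _

theorem diagonalSmoothing_eq_map_prod (μ : Measure (ι → AddCircle T)) [SFinite μ] (δ : ℝ) :
    diagonalSmoothing μ δ = (μ.prod (gaussianReal 0 1)).map
      fun p ↦ p.1 + Function.const ι ((δ * p.2 : ℝ) : AddCircle T) := by
  rw [diagonalSmoothing, wrappedGaussian, map_map Pi.measurable_constAddMonoidHom (by fun_prop),
    conv_map_eq_map_prod _ _ (Pi.measurable_constAddMonoidHom.comp (by fun_prop))]
  rfl

theorem map_eval_diagonalSmoothing (μ : Measure (ι → AddCircle T)) [SFinite μ] (δ : ℝ) (i : ι) :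
    (diagonalSmoothing μ δ).map (fun x ↦ x i) = μ.map (fun x ↦ x i) ∗ wrappedGaussian T δ := by
  change Measure.map (Pi.evalAddMonoidHom (fun _ ↦ AddCircle T) i) _ =
    Measure.map (Pi.evalAddMonoidHom (fun _ ↦ AddCircle T) i) μ ∗ _
  rw [diagonalSmoothing, map_conv_addMonoidHom _ (measurable_pi_apply i),
    map_map (by exact measurable_pi_apply i) Pi.measurable_constAddMonoidHom]
  exact congrArg _ map_id

theorem tendsto_integral_diagonalSmoothing [Countable ι] (μ : Measure (ι → AddCircle T))
    [IsProbabilityMeasure μ] (f : BoundedContinuousFunction (ι → AddCircle T) ℝ) :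
    Tendsto (fun δ ↦ ∫ x, f x ∂diagonalSmoothing μ δ) (𝓝 0) (𝓝 (∫ x, f x ∂μ)) := by
  have hsmooth (δ : ℝ) : ∫ x, f x ∂diagonalSmoothing μ δ = ∫ p, f (p.1 + Function.const ι
      ((δ * p.2 : ℝ) : AddCircle T)) ∂(μ.prod (gaussianReal 0 1)) := by
    rw [diagonalSmoothing_eq_map_prod, integral_map (by fun_prop) f.continuous.aestronglyMeasurable]
  have hμ : ∫ x, f x ∂μ = ∫ p, f p.1 ∂(μ.prod (gaussianReal 0 1)) := by
    simp [integral_fun_fst]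
  simp_rw [hsmooth, hμ]
  refine tendsto_integral_filter_of_dominated_convergence (fun _ ↦ ‖f‖)
    (.of_forall fun δ ↦ by fun_prop) (.of_forall fun δ ↦ ae_of_all _ fun p ↦ f.norm_coe_le_norm _)
    (integrable_const _) (ae_of_all _ fun p ↦ ?_)
  have hshift : Continuous fun δ : ℝ ↦ p.1 + Function.const ι ((δ * p.2 : ℝ) : AddCircle T) := by
    fun_prop
  simpa [Function.comp_def] using (f.continuous.tendsto _).comp (hshift.tendsto 0)

end DiagonalSmoothing

section Sims

variable {Γ : Type*} [AddGroup Γ]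

theorem map_shiftMap_diagonalSmoothing {μ : Measure (Γ → AddCircle (1 : ℝ))} [SFinite μ] {β : Γ}
    (hμ : μ.map (shiftMap β) = μ) (δ : ℝ) :
    (diagonalSmoothing μ δ).map (shiftMap β) = diagonalSmoothing μ δ := by
  let S : (Γ → AddCircle (1 : ℝ)) →+ (Γ → AddCircle (1 : ℝ)) :=
    { toFun := shiftMap β, map_zero' := rfl, map_add' := fun _ _ ↦ rfl }
  have hS : Measurable S := measurable_pi_lambda _ fun γ ↦ measurable_pi_apply (γ + β)
  change Measure.map S _ = _
  rw [diagonalSmoothing, map_conv_addMonoidHom S hS, map_map hS Pi.measurable_constAddMonoidHom]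
  exact congrArg₂ _ hμ rfl

def smoothingSim (μ : {μ : ProbabilityMeasure (Γ → AddCircle (1 : ℝ)) // IsSim μ}) (δ : ℝ) :
    {μ : ProbabilityMeasure (Γ → AddCircle (1 : ℝ)) // IsSim μ} :=
  ⟨⟨diagonalSmoothing μ.1 δ, inferInstance⟩, fun β ↦ map_shiftMap_diagonalSmoothing (μ.2 β) δ⟩

theorem isGoodMeasure_marg_smoothingSim
    (μ : {μ : ProbabilityMeasure (Γ → AddCircle (1 : ℝ)) // IsSim μ}) {δ : ℝ} (hδ : δ ≠ 0) :
    IsGoodMeasure (Marg (smoothingSim μ δ).1) := by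
  have := nullSingletonClass_wrappedGaussian (T := 1) hδ
  have := isOpenPosMeasure_wrappedGaussian (T := 1) hδ
  have : IsProbabilityMeasure ((μ.1 : Measure (Γ → AddCircle (1 : ℝ))).map fun x ↦ x 0) :=
    isProbabilityMeasure_map (measurable_pi_apply 0).aemeasurable
  change IsGoodMeasure
    ((diagonalSmoothing (μ.1 : Measure (Γ → AddCircle (1 : ℝ))) δ).map fun x ↦ x 0)
  rw [map_eval_diagonalSmoothing]
  -- applied by name: instance synthesis does not unify the group structures of `AddCircle 1` here
  exact ⟨(nullSingletonClass_conv _ _).measure_singleton,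
    fun _ hV hne ↦ ((isOpenPosMeasure_conv _ _).open_pos _ hV hne).bot_lt⟩

variable [Countable Γ]

theorem tendsto_smoothingSim (μ : {μ : ProbabilityMeasure (Γ → AddCircle (1 : ℝ)) // IsSim μ}) :
    Tendsto (smoothingSim μ) (𝓝 0) (𝓝 μ) :=
  tendsto_subtype_rng.2 (ProbabilityMeasure.tendsto_iff_forall_integral_tendsto.2 fun f ↦
    tendsto_integral_diagonalSmoothing μ.1.toMeasure f)

theorem dense_setOf_isGoodMeasure_marg :
    Dense {μ : {μ : ProbabilityMeasure (Γ → AddCircle (1 : ℝ)) // IsSim μ} |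
      IsGoodMeasure (Marg μ.1)} := fun μ ↦
  mem_closure_of_tendsto ((tendsto_smoothingSim μ).mono_left (nhdsWithin_le_nhds (s := {0}ᶜ)))
    (eventually_nhdsWithin_of_forall fun _ hδ ↦ isGoodMeasure_marg_smoothingSim μ hδ)

theorem isGδ_setOf_isGoodMeasure :
    IsGδ {ν : ProbabilityMeasure (AddCircle (1 : ℝ)) | IsGoodMeasure ν} :=
  ProbabilityMeasure.isGδ_setOf_forall_measure_singleton_eq_zero.inter
    ProbabilityMeasure.isGδ_setOf_forall_isOpen_measure_pos

theorem isGδ_setOf_isGoodMeasure_marg :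
    IsGδ {μ : {μ : ProbabilityMeasure (Γ → AddCircle (1 : ℝ)) // IsSim μ} |
      IsGoodMeasure (Marg μ.1)} := by
  have hmarg := (ProbabilityMeasure.continuous_map (Ω := Γ → AddCircle (1 : ℝ))
    (continuous_apply 0)).comp (continuous_subtype_val (p := IsSim))
  exact IsGδ.preimage hmarg isGδ_setOf_isGoodMeasure

end Sims

/-- In the space `•SIM` of shift-invariant Borel probability measures on `Ŷ = Y^Γ`
(with the weak-* topology), the good sims — those whose one-dimensional marginal is
nonatomic with full support — form a comeager subset. -/
theorem good_sims_comeager {Γ : Type*} [AddGroup Γ] [Countable Γ] :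
    {μhat : {μ : ProbabilityMeasure (Γ → AddCircle (1 : ℝ)) // IsSim μ} |
        IsGoodMeasure (Marg μhat.1)} ∈
      residual {μ : ProbabilityMeasure (Γ → AddCircle (1 : ℝ)) // IsSim μ} :=
  residual_of_dense_Gδ isGδ_setOf_isGoodMeasure_marg dense_setOf_isGoodMeasure_marg
end
end

section
/- Let Γ be a countable group (written additively) and let Ŷ = Y^Γ be the product of copies of the circle Y = ℝ/ℤ with the shift action S^β(ŷ)[γ] = ŷ[γ+β], and let •SIM be the set of shift-invariant Borel probability measures on Ŷ with the weak-* topology. Then the set of free sims — those μ̂ ∈ •SIM such that for every β ∈ Γ with β ≠ 0 the set {ŷ ∈ Ŷ : S^β(ŷ) = ŷ} has μ̂-measure zero — is a comeager subset of •SIM. -/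
open MeasureTheory

noncomputable section

/-!
Each fixed-point set `{y | S^β y = y}` is closed, and by the portmanteau theorem `μ ↦ μ F` is
upper semicontinuous for closed `F`, so the free sims form a Gδ; it remains to show they are dense.
Convolving a sim `μ` with the product measure whose coordinates are i.i.d. uniform on the arc
`[0, t]` of `ℝ/ℤ` gives a sim that tends to `μ` as `t → 0`. For `0 < t < 1` it is free: every
translate of the fixed-point set of `S^β` lies in some `{z | z β = z 0 + c}`, which is null for
the noise because `z 0` and `z β` are independent and atomless.
-/

open Filter Topology Set Function
open scoped ENNReal

namespace MeasureTheory

section Portmanteau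

variable {Ω : Type*} [MeasurableSpace Ω] [TopologicalSpace Ω] [OpensMeasurableSpace Ω]
  [HasOuterApproxClosed Ω] {F : Set Ω}

lemma ProbabilityMeasure.upperSemicontinuous_measure_of_isClosed_s11 (hF : IsClosed F) :
    UpperSemicontinuous fun μ : ProbabilityMeasure Ω => (μ : Measure Ω) F :=
  upperSemicontinuous_iff_limsup_le.2 fun _ =>
    ProbabilityMeasure.limsup_measure_closed_le_of_tendsto tendsto_id hF

lemma ProbabilityMeasure.isGδ_setOf_measure_eq_zero (hF : IsClosed F) :
    IsGδ {μ : ProbabilityMeasure Ω | (μ : Measure Ω) F = 0} := by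
  have hiInter : {μ : ProbabilityMeasure Ω | (μ : Measure Ω) F = 0} =
      ⋂ n : ℕ, (fun μ : ProbabilityMeasure Ω => (μ : Measure Ω) F) ⁻¹' Iio (n : ℝ≥0∞)⁻¹ := by
    ext μ
    simp only [mem_ofPred_eq, mem_iInter, mem_preimage, mem_Iio]
    refine ⟨fun h n => h ▸ ENNReal.inv_pos.2 (ENNReal.natCast_ne_top n), fun h => ?_⟩
    by_contra hne
    obtain ⟨n, hn⟩ := ENNReal.exists_inv_nat_lt hne
    exact lt_asymm hn (h n)
  rw [hiInter]
  exact .iInter fun n =>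
    ((upperSemicontinuous_measure_of_isClosed_s11 hF).isOpen_preimage _).isGδ

end Portmanteau

lemma Measure.conv_apply_eq_zero_of_forall_preimage_add {G : Type*} [AddMonoid G]
    [MeasurableSpace G] [MeasurableAdd₂ G] {μ ν : Measure G} {s : Set G} (hs : MeasurableSet s)
    (h : ∀ x, ν ((x + ·) ⁻¹' s) = 0) : (μ ∗ ν) s = 0 := by
  rw [Measure.conv, Measure.map_apply measurable_add hs]
  exact Measure.measure_prod_null_of_ae_null (measurable_add hs) (ae_of_all _ h)

lemma tendsto_conv_of_tendsto_zero {ι Ω G : Type*} {l : Filter ι} [l.IsCountablyGenerated]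
    [MeasurableSpace Ω] [AddMonoid G] [TopologicalSpace G] [ContinuousAdd G] [MeasurableSpace G]
    [OpensMeasurableSpace G] [MeasurableAdd₂ G] (μ : ProbabilityMeasure G)
    (P : Measure Ω) [IsProbabilityMeasure P] {X : ι → Ω → G} (hX : ∀ i, Measurable (X i))
    (hX₀ : ∀ ω, Tendsto (X · ω) l (𝓝 0)) (ν : ι → Measure G) [∀ i, IsProbabilityMeasure (ν i)]
    (hν : ∀ i, ν i = P.map (X i)) :
    Tendsto (β := ProbabilityMeasure G) (fun i => ⟨μ ∗ ν i, inferInstance⟩) l (𝓝 μ) := by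
  have hlim := (tendstoInDistribution_of_ae_tendsto (μ' := (μ : Measure G).prod P)
    (X := fun i p => p.1 + X i p.2) (Z := Prod.fst)
    (fun i => (measurable_fst.add ((hX i).comp measurable_snd)).aemeasurable)
    measurable_fst.aemeasurable
    (ae_of_all _ fun p => by simpa using tendsto_const_nhds.add (hX₀ p.2))).tendsto
  have hμ : (⟨((μ : Measure G).prod P).map Prod.fst,
      Measure.isProbabilityMeasure_map measurable_fst.aemeasurable⟩ : ProbabilityMeasure G) = μ :=
    Subtype.ext (by simp [Measure.map_fst_prod])
  rw [hμ] at hlim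
  refine hlim.congr fun i => Subtype.ext ?_
  symm
  calc (μ : Measure G) ∗ ν i
        = (((μ : Measure G).map id).prod (P.map (X i))).map fun p => p.1 + p.2 := by
          rw [hν, Measure.map_id]; rfl
    _ = ((μ : Measure G).prod P).map (fun p => p.1 + X i p.2) := by
          rw [Measure.map_prod_map _ _ measurable_id (hX i),
            Measure.map_map measurable_add (measurable_id.prodMap (hX i))]
          rfl

lemma Measure.infinitePi_graph_eq_zero {ι G : Type*} [MeasurableSpace G] [MeasurableEq G]
    (P : ι → Measure G) [∀ i, IsProbabilityMeasure (P i)] {i j : ι} (hij : i ≠ j)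
    [NullSingletonClass (P j)] {f : G → G} (hf : Measurable f) :
    Measure.infinitePi P {z | z j = f (z i)} = 0 := by
  have hgraph : MeasurableSet {p : G × G | p.2 = f p.1} :=
    measurableSet_eq_fun measurable_snd (hf.comp measurable_fst)
  change Measure.infinitePi P ((fun z => (z i, z j)) ⁻¹' {p : G × G | p.2 = f p.1}) = 0
  rw [← Measure.map_apply (by fun_prop) hgraph, Measure.infinitePi_map_eval_prod hij]
  refine Measure.measure_prod_null_of_ae_null hgraph (ae_of_all _ fun a => ?_)
  exact measure_singleton (f a)

end MeasureTheory

section Shift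

variable {Γ : Type*} [AddGroup Γ]

lemma continuous_shiftMap (β : Γ) : Continuous (shiftMap β : UnitAddTorus Γ → UnitAddTorus Γ) :=
  continuous_pi fun γ => continuous_apply (γ + β)

lemma isClosed_setOf_shiftMap_eq (β : Γ) : IsClosed {y : UnitAddTorus Γ | shiftMap β y = y} :=
  isClosed_eq (continuous_shiftMap β) continuous_id

def shiftAddHom (β : Γ) : UnitAddTorus Γ →+ UnitAddTorus Γ where
  toFun := shiftMap β
  map_zero' := rfl
  map_add' _ _ := rfl

lemma map_shiftMap_infinitePi (ρ : Measure UnitAddCircle) [IsProbabilityMeasure ρ] (β : Γ) :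
    (Measure.infinitePi fun _ : Γ => ρ).map (shiftMap β) = Measure.infinitePi fun _ => ρ :=
  Measure.map_infinitePi_infinitePi_of_inj (add_left_injective β)

end Shift

lemma continuous_coe_mul_unitInterval :
    Continuous fun p : ℝ × unitInterval => ((p.1 * p.2 : ℝ) : UnitAddCircle) :=
  (AddCircle.continuous_mk' 1).comp (by fun_prop)

lemma injective_coe_mul_unitInterval {t : ℝ} (ht0 : 0 < t) (ht1 : t < 1) :
    Injective fun u : unitInterval => ((t * u : ℝ) : UnitAddCircle) := by
  have hmem (u : unitInterval) : t * u ∈ Ico (0 : ℝ) (0 + 1) :=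
    ⟨mul_nonneg ht0.le u.2.1, by nlinarith [u.2.1, u.2.2]⟩
  intro u v huv
  exact Subtype.ext <| mul_left_cancel₀ ht0.ne' <|
    (AddCircle.coe_eq_coe_iff_of_mem_Ico (hmem u) (hmem v)).1 huv

def arcMeasure (t : ℝ) : Measure UnitAddCircle :=
  volume.map fun u : unitInterval => ((t * u : ℝ) : UnitAddCircle)

lemma measurable_coe_mul_unitInterval (t : ℝ) :
    Measurable fun u : unitInterval => ((t * u : ℝ) : UnitAddCircle) :=
  (continuous_coe_mul_unitInterval.comp (Continuous.prodMk_right t)).measurable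

instance (t : ℝ) : IsProbabilityMeasure (arcMeasure t) :=
  Measure.isProbabilityMeasure_map (measurable_coe_mul_unitInterval t).aemeasurable

lemma nullSingletonClass_arcMeasure {t : ℝ} (ht0 : 0 < t) (ht1 : t < 1) :
    NullSingletonClass (arcMeasure t) where
  measure_singleton a := by
    rw [arcMeasure, Measure.map_apply (measurable_coe_mul_unitInterval t)
      (measurableSet_singleton a)]
    exact (subsingleton_singleton.preimage (injective_coe_mul_unitInterval ht0 ht1)).measure_zero _

def arcNoise (Γ : Type*) (t : ℝ) : Measure (UnitAddTorus Γ) :=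
  Measure.infinitePi fun _ : Γ => arcMeasure t

instance (Γ : Type*) (t : ℝ) : IsProbabilityMeasure (arcNoise Γ t) := by
  unfold arcNoise; infer_instance

section Countable

variable {Γ : Type*} [Countable Γ]

lemma tendsto_conv_arcNoise (μ : ProbabilityMeasure (UnitAddTorus Γ)) :
    Tendsto (β := ProbabilityMeasure (UnitAddTorus Γ))
      (fun t => ⟨μ ∗ arcNoise Γ t, inferInstance⟩) (𝓝 0) (𝓝 μ) := by
  refine tendsto_conv_of_tendsto_zero μ (Measure.infinitePi fun _ : Γ => volume)
    (X := fun t (ω : Γ → unitInterval) γ => ((t * ω γ : ℝ) : UnitAddCircle))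
    (fun t => measurable_pi_lambda _ fun γ =>
      (measurable_coe_mul_unitInterval t).comp (measurable_pi_apply γ))
    (fun ω => ?_) _ fun t => (Measure.infinitePi_map_pi _ fun _ =>
      measurable_coe_mul_unitInterval t).symm
  refine tendsto_pi_nhds.2 fun γ => ?_
  simpa [Function.comp_def] using
    (continuous_coe_mul_unitInterval.comp (Continuous.prodMk_left (ω γ))).tendsto 0

variable [AddGroup Γ]

lemma isSim_conv_arcNoise {μ : ProbabilityMeasure (UnitAddTorus Γ)} (hμ : IsSim μ) (t : ℝ) :
    IsSim ⟨μ ∗ arcNoise Γ t, inferInstance⟩ := fun β => by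
  change (μ.toMeasure ∗ arcNoise Γ t).map (shiftAddHom β) = _
  rw [Measure.map_conv_addMonoidHom _ (continuous_shiftMap β).measurable]
  exact congrArg₂ _ (hμ β) (map_shiftMap_infinitePi _ β)

lemma conv_arcNoise_setOf_shiftMap_eq (μ : Measure (UnitAddTorus Γ)) {β : Γ} (hβ : β ≠ 0)
    {t : ℝ} (ht0 : 0 < t) (ht1 : t < 1) :
    (μ ∗ arcNoise Γ t) {y | shiftMap β y = y} = 0 := by
  have := nullSingletonClass_arcMeasure ht0 ht1
  refine Measure.conv_apply_eq_zero_of_forall_preimage_add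
    (isClosed_setOf_shiftMap_eq β).measurableSet fun x => measure_mono_null (fun z hz => ?_)
    (Measure.infinitePi_graph_eq_zero _ hβ.symm (measurable_add_const (x 0 - x β)))
  have h0 : x β + z β = x 0 + z 0 := by simpa [shiftMap] using congrFun hz 0
  calc z β = x β + z β - x β := by abel
    _ = z 0 + (x 0 - x β) := by rw [h0]; abel

lemma dense_setOf_free_sims :
    Dense {μ : {μ : ProbabilityMeasure (UnitAddTorus Γ) // IsSim μ} |
      ∀ β : Γ, β ≠ 0 → μ.1.toMeasure {y | shiftMap β y = y} = 0} := by
  rintro ⟨μ, hμ⟩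
  refine mem_closure_of_tendsto (b := 𝓝[>] 0)
    (f := fun t => ⟨⟨μ ∗ arcNoise Γ t, inferInstance⟩, isSim_conv_arcNoise hμ t⟩)
    (tendsto_subtype_rng.2 ((tendsto_conv_arcNoise μ).mono_left nhdsWithin_le_nhds)) ?_
  filter_upwards [Ioo_mem_nhdsGT one_pos] with t ht β hβ
  exact conv_arcNoise_setOf_shiftMap_eq _ hβ ht.1 ht.2

end Countable

/-- In the space `•SIM` of shift-invariant Borel probability measures on `Ŷ = Y^Γ`
(with the weak-* topology), the *free* sims — those giving measure zero to the
fixed-point set of `S^β` for every `β ≠ 0` — form a comeager subset. -/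
theorem free_sims_comeager {Γ : Type*} [AddGroup Γ] [Countable Γ] :
    {μhat : {μ : ProbabilityMeasure (Γ → AddCircle (1 : ℝ)) // IsSim μ} |
        ∀ β : Γ, β ≠ 0 →
          μhat.1.toMeasure {yhat : Γ → AddCircle (1 : ℝ) | shiftMap β yhat = yhat} = 0} ∈
      residual {μ : ProbabilityMeasure (Γ → AddCircle (1 : ℝ)) // IsSim μ} := by
  refine residual_of_dense_Gδ ?_ dense_setOf_free_sims
  have hiInter : {μhat : {μ : ProbabilityMeasure (UnitAddTorus Γ) // IsSim μ} |
        ∀ β : Γ, β ≠ 0 → μhat.1.toMeasure {y | shiftMap β y = y} = 0} =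
      ⋂ β : {β : Γ // β ≠ 0}, Subtype.val ⁻¹'
        {μ : ProbabilityMeasure (UnitAddTorus Γ) | μ.toMeasure {y | shiftMap β.1 y = y} = 0} := by
    ext
    simp
  rw [hiInter]
  exact .iInter fun β => (ProbabilityMeasure.isGδ_setOf_measure_eq_zero
    (isClosed_setOf_shiftMap_eq β.1)).preimage continuous_subtype_val
end
end

section
/- Let Y be the circle ℝ/ℤ and let η be a Borel probability measure on Y × Y both of whose marginals equal a fixed good (nonatomic, full-support) Borel probability measure μ on Y. Then the following are equivalent: (i) for every Borel set B ⊆ Y there exists a Borel set A ⊆ Y with η(A × Y) = η(A × B) = η(Y × B); (ii) there exists a Borel measurable μ-preserving map R : Y → Y such that η(A × B) = μ(A ∩ R⁻¹(B)) for all Borel sets A, B ⊆ Y (i.e., η is a graph joining, living on the graph of R). -/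
open MeasureTheory Set Filter

noncomputable section

namespace GraphJoiningAux

abbrev Y := AddCircle (1:ℝ)

section
variable [Fact ((0:ℝ) < 1)]

def e : Y → ℝ := fun y => ((AddCircle.measurableEquivIco (T := (1:ℝ)) 0 y : Ico (0:ℝ) (0+1)) : ℝ)

lemma e_meas : Measurable e :=
  measurable_subtype_coe.comp (AddCircle.measurableEquivIco (T := (1:ℝ)) 0).measurable

lemma e_mem (y : Y) : e y ∈ Ico (0:ℝ) 1 := by
  have := (AddCircle.measurableEquivIco (T := (1:ℝ)) 0 y).2
  simpa [e] using this

lemma e_sect (y : Y) : ((e y : ℝ) : Y) = y := (AddCircle.equivIco (1:ℝ) 0).symm_apply_apply y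

/-- dyadic "interval" on the circle -/
def Bd (n k : ℕ) : Set Y := e ⁻¹' Ico ((k:ℝ)/2^n) ((k+1:ℝ)/2^n)

lemma Bd_meas (n k : ℕ) : MeasurableSet (Bd n k) := e_meas measurableSet_Ico

lemma Bd_mem_iff {n k : ℕ} {y : Y} :
    y ∈ Bd n k ↔ (k:ℝ)/2^n ≤ e y ∧ e y < (k+1:ℝ)/2^n := Iff.rfl

lemma Bd_uniq {n k k' : ℕ} {y : Y} (h : y ∈ Bd n k) (h' : y ∈ Bd n k') : k = k' := by
  rw [Bd_mem_iff] at h h'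
  have hpow : (0:ℝ) < 2^n := by positivity
  have h1 : (k:ℝ)/2^n < ((k':ℝ)+1)/2^n := lt_of_le_of_lt h.1 h'.2
  have h2 : (k':ℝ)/2^n < ((k:ℝ)+1)/2^n := lt_of_le_of_lt h'.1 h.2
  rw [div_lt_div_iff_of_pos_right hpow] at h1 h2
  have h1' : k < k' + 1 := by exact_mod_cast h1
  have h2' : k' < k + 1 := by exact_mod_cast h2
  omega

lemma Bd_floor_mem (n : ℕ) (y : Y) : y ∈ Bd n ⌊e y * 2^n⌋₊ := by
  have hy := e_mem y
  have hpow : (0:ℝ) < 2^n := by positivity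
  have hnn : 0 ≤ e y * 2^n := mul_nonneg hy.1 hpow.le
  rw [Bd_mem_iff]
  constructor
  · rw [div_le_iff₀ hpow]
    exact Nat.floor_le hnn
  · rw [lt_div_iff₀ hpow]  -- e y * 2^n < ⌊⌋+1
    exact_mod_cast Nat.lt_floor_add_one (e y * 2^n)

lemma Bd_floor_lt (n : ℕ) (y : Y) : ⌊e y * 2^n⌋₊ < 2^n := by
  have hy := e_mem y
  have hpow : (0:ℝ) < 2^n := by positivity
  have : e y * 2^n < 2^n := by nlinarith [hy.1, hy.2]
  have h2 : e y * 2^n < ((2^n : ℕ) : ℝ) := by push_cast; exact this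
  exact (Nat.floor_lt (mul_nonneg hy.1 hpow.le)).2 h2

theorem forward
    (μ : Measure Y) [IsProbabilityMeasure μ]
    (η : Measure (Y × Y)) [IsProbabilityMeasure η]
    (hfst : η.map Prod.fst = μ) (hsnd : η.map Prod.snd = μ)
    (h : ∀ B : Set Y, MeasurableSet B →
        ∃ A : Set Y, MeasurableSet A ∧
          η (A ×ˢ (univ : Set Y)) = η (A ×ˢ B) ∧ η (A ×ˢ B) = η ((univ : Set Y) ×ˢ B)) :
    ∃ R : Y → Y, Measurable R ∧
      (∀ B : Set Y, MeasurableSet B → μ (R ⁻¹' B) = μ B) ∧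
      ∀ A B : Set Y, MeasurableSet A → MeasurableSet B →
        η (A ×ˢ B) = μ (A ∩ R ⁻¹' B) := by
  classical
  have hμfst : ∀ S : Set Y, MeasurableSet S → η (S ×ˢ (univ : Set Y)) = μ S := by
    intro S hS
    rw [← hfst, Measure.map_apply measurable_fst hS, prod_univ]
  have hμsnd : ∀ S : Set Y, MeasurableSet S → η ((univ : Set Y) ×ˢ S) = μ S := by
    intro S hS
    rw [← hsnd, Measure.map_apply measurable_snd hS, univ_prod]
  have hc : ∀ n k : ℕ, ∃ A, MeasurableSet A ∧
      η (A ×ˢ (univ : Set Y)) = η (A ×ˢ Bd n k) ∧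
      η (A ×ˢ Bd n k) = η ((univ : Set Y) ×ˢ Bd n k) :=
    fun n k => h (Bd n k) (Bd_meas n k)
  choose A hAm hA1 hA2 using hc
  -- the two null sets
  have null1 : ∀ n k, η (A n k ×ˢ (Bd n k)ᶜ) = 0 := by
    intro n k
    have hsub : A n k ×ˢ Bd n k ⊆ A n k ×ˢ (univ : Set Y) := prod_mono_right (subset_univ _)
    have hd := measure_diff hsub ((hAm n k).prod (Bd_meas n k)).nullMeasurableSet
      (measure_ne_top η _)
    have hset : A n k ×ˢ (univ : Set Y) \ A n k ×ˢ Bd n k = A n k ×ˢ (Bd n k)ᶜ := by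
      ext ⟨x, y⟩; simp [Set.mem_prod]; tauto
    rw [hset] at hd
    rw [hd, hA1 n k, tsub_self]
  have null2 : ∀ n k, η ((A n k)ᶜ ×ˢ Bd n k) = 0 := by
    intro n k
    have hsub : A n k ×ˢ Bd n k ⊆ (univ : Set Y) ×ˢ Bd n k := prod_mono_left (subset_univ _)
    have hd := measure_diff hsub ((hAm n k).prod (Bd_meas n k)).nullMeasurableSet
      (measure_ne_top η _)
    have hset : (univ : Set Y) ×ˢ Bd n k \ A n k ×ˢ Bd n k = (A n k)ᶜ ×ˢ Bd n k := by
      ext ⟨x, y⟩; simp [Set.mem_prod]; tauto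
    rw [hset] at hd
    rw [hd, ← hA2 n k, tsub_self]
  set N : Set (Y × Y) :=
    ⋃ n : ℕ, ⋃ k : ℕ, (A n k ×ˢ (Bd n k)ᶜ ∪ (A n k)ᶜ ×ˢ Bd n k) with hNdef
  have hN : η N = 0 :=
    measure_iUnion_null fun n => measure_iUnion_null fun k =>
      measure_union_null (null1 n k) (null2 n k)
  have key : ∀ p : Y × Y, p ∉ N → ∀ n k, (p.1 ∈ A n k ↔ p.2 ∈ Bd n k) := by
    intro p hp n k
    constructor
    · intro h1
      by_contra h2
      exact hp (mem_iUnion.2 ⟨n, mem_iUnion.2 ⟨k, Or.inl ⟨h1, h2⟩⟩⟩)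
    · intro h1
      by_contra h2
      exact hp (mem_iUnion.2 ⟨n, mem_iUnion.2 ⟨k, Or.inr ⟨h2, h1⟩⟩⟩)
  -- the coding functions
  set f : ℕ → Y → ℝ := fun n x =>
    ∑ k ∈ Finset.range (2^n), (A n k).indicator (fun _ => (k:ℝ)/2^n) x with hfdef
  have hf_meas : ∀ n, Measurable (f n) := fun n =>
    Finset.measurable_sum _ fun k _ => Measurable.indicator measurable_const (hAm n k)
  set R : Y → Y := fun x => ((liminf (fun n => f n x) atTop : ℝ) : Y) with hRdef
  have hRm : Measurable R := AddCircle.measurable_mk'.comp (Measurable.liminf hf_meas)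
  -- points outside N lie on the graph of R
  have key2 : ∀ p : Y × Y, p ∉ N → p.2 = R p.1 := by
    rintro ⟨x, y⟩ hp
    have hval : ∀ n, f n x = (⌊e y * 2^n⌋₊ : ℝ)/2^n := by
      intro n
      set k₀ := ⌊e y * 2^n⌋₊ with hk₀
      have hyB : y ∈ Bd n k₀ := Bd_floor_mem n y
      have hk₀lt : k₀ < 2^n := Bd_floor_lt n y
      have hxA : x ∈ A n k₀ := (key ⟨x, y⟩ hp n k₀).2 hyB
      rw [hfdef]
      simp only
      rw [Finset.sum_eq_single_of_mem k₀ (Finset.mem_range.2 hk₀lt)]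
      · exact Set.indicator_of_mem hxA _
      · intro k _ hkne
        apply Set.indicator_of_notMem
        intro hxk
        exact hkne (Bd_uniq ((key ⟨x, y⟩ hp n k).1 hxk) hyB)
    have hto : Tendsto (fun n => f n x) atTop (nhds (e y)) := by
      rw [tendsto_iff_dist_tendsto_zero]
      have hgeo : Tendsto (fun n : ℕ => ((1:ℝ)/2)^n) atTop (nhds 0) :=
        tendsto_pow_atTop_nhds_zero_of_lt_one (by norm_num) (by norm_num)
      refine squeeze_zero (fun n => dist_nonneg) (fun n => ?_) hgeo
      rw [hval n, Real.dist_eq, abs_le]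
      have hyB := Bd_floor_mem n y
      rw [Bd_mem_iff] at hyB
      obtain ⟨hl, hr⟩ := hyB
      rw [add_div] at hr
      have hhalf : ((1:ℝ)/2)^n = 1/2^n := by rw [div_pow, one_pow]
      have hpos : (0:ℝ) < 1/2^n := by positivity
      rw [hhalf]
      constructor <;> linarith
    have hlim : liminf (fun n => f n x) atTop = e y := hto.liminf_eq
    show y = R x
    rw [hRdef]
    simp only
    rw [hlim, e_sect]
  -- the graph
  set G : Set (Y × Y) := {p : Y × Y | p.2 = R p.1} with hGdef
  have hGm : MeasurableSet G := measurableSet_eq_fun measurable_snd (hRm.comp measurable_fst)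
  have hGc : η Gᶜ = 0 := by
    apply measure_mono_null _ hN
    intro p hp
    by_contra hpN
    exact hp (key2 p hpN)
  -- main identity
  have main : ∀ A' B : Set Y, MeasurableSet A' → MeasurableSet B →
      η (A' ×ˢ B) = μ (A' ∩ R ⁻¹' B) := by
    intro A' B hA' hB
    have hset : (A' ×ˢ B) ∩ G = ((A' ∩ R ⁻¹' B) ×ˢ (univ : Set Y)) ∩ G := by
      ext ⟨x, y⟩
      simp only [mem_inter_iff, Set.mem_prod, hGdef, mem_setOf_eq, mem_preimage, mem_univ,
        and_true]
      constructor
      · rintro ⟨⟨h1, h2⟩, h3⟩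
        refine ⟨⟨h1, ?_⟩, h3⟩
        rwa [h3] at h2
      · rintro ⟨⟨h1, h2⟩, h3⟩
        refine ⟨⟨h1, ?_⟩, h3⟩
        rwa [← h3] at h2
    calc η (A' ×ˢ B) = η ((A' ×ˢ B) ∩ G) := (measure_inter_conull hGc).symm
      _ = η (((A' ∩ R ⁻¹' B) ×ˢ (univ : Set Y)) ∩ G) := by rw [hset]
      _ = η ((A' ∩ R ⁻¹' B) ×ˢ (univ : Set Y)) := measure_inter_conull hGc
      _ = μ (A' ∩ R ⁻¹' B) := hμfst _ (hA'.inter (hRm hB))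
  refine ⟨R, hRm, fun B hB => ?_, main⟩
  have h1 := main univ B MeasurableSet.univ hB
  rw [hμsnd B hB, univ_inter] at h1
  exact h1.symm

end
end GraphJoiningAux

open MeasureTheory

/-- Characterization of graph joinings. Let `μ` be a good (nonatomic, full-support) Borel
probability measure on the circle `Y = ℝ/ℤ` and let `η` be a Borel probability measure on
`Y × Y` both of whose marginals equal `μ`. Then: for every Borel `B` there is a Borel `A`
with `η(A × Y) = η(A × B) = η(Y × B)`, if and only if `η` is a graph joining, i.e. there is a
Borel `μ`-preserving map `R : Y → Y` with `η(A × B) = μ(A ∩ R⁻¹(B))` for all Borel `A, B`. -/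
theorem graph_joining_characterization
    (μ : Measure (AddCircle (1 : ℝ))) [IsProbabilityMeasure μ]
    (hna : ∀ y : AddCircle (1 : ℝ), μ {y} = 0)
    (hfs : ∀ V : Set (AddCircle (1 : ℝ)), IsOpen V → V.Nonempty → 0 < μ V)
    (η : Measure (AddCircle (1 : ℝ) × AddCircle (1 : ℝ))) [IsProbabilityMeasure η]
    (hfst : η.map Prod.fst = μ) (hsnd : η.map Prod.snd = μ) :
    (∀ B : Set (AddCircle (1 : ℝ)), MeasurableSet B →
        ∃ A : Set (AddCircle (1 : ℝ)), MeasurableSet A ∧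
          η (A ×ˢ (Set.univ : Set (AddCircle (1 : ℝ)))) = η (A ×ˢ B) ∧
          η (A ×ˢ B) = η ((Set.univ : Set (AddCircle (1 : ℝ))) ×ˢ B)) ↔
      (∃ R : AddCircle (1 : ℝ) → AddCircle (1 : ℝ), Measurable R ∧
        (∀ B : Set (AddCircle (1 : ℝ)), MeasurableSet B → μ (R ⁻¹' B) = μ B) ∧
        ∀ A B : Set (AddCircle (1 : ℝ)), MeasurableSet A → MeasurableSet B →
          η (A ×ˢ B) = μ (A ∩ R ⁻¹' B)) := by
  haveI : Fact ((0:ℝ) < 1) := ⟨zero_lt_one⟩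
  constructor
  · intro h
    exact GraphJoiningAux.forward μ η hfst hsnd h
  · rintro ⟨R, hRm, hRpres, hRgraph⟩ B hB
    refine ⟨R ⁻¹' B, hRm hB, ?_, ?_⟩
    · rw [hRgraph (R ⁻¹' B) Set.univ (hRm hB) MeasurableSet.univ,
        hRgraph (R ⁻¹' B) B (hRm hB) hB]
      simp
    · rw [hRgraph (R ⁻¹' B) B (hRm hB) hB,
        hRgraph Set.univ B MeasurableSet.univ hB]
      simp
end
end

section
/- Let Y be the circle ℝ/ℤ and let M denote the set of Borel probability measures η on Y × Y whose two marginals are equal to each other and are good (nonatomic with full support), equipped with the subspace weak-* topology inside the space of all Borel probability measures on Y × Y. Then the set of graph joinings — those η ∈ M for which there exists a Borel measurable map R : Y → Y preserving the common marginal μ of η with η(A × B) = μ(A ∩ R⁻¹(B)) for all Borel A, B — is a Gδ subset of M (in the subspace topology). -/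
/-!
Embed the circle in `ℂ` by `e`. A measure `η` on `Y × Y` is the graph joining of a Borel map `R`
exactly when `e y₂ = e (R y₁)` for `η`-a.e. `(y₁, y₂)`. Since continuous functions are dense in
`L¹`, this happens iff for every `ε > 0` some continuous `g` has `∫ |e y₂ - g y₁| dη < ε`:
one direction approximates `e ∘ R`, the other takes a sequence `g k` with summable errors, which
converges a.e. to `e y₂`, so that its pointwise limit is a measurable function of `y₁` alone.
For fixed `g` the integrand is continuous on the compact space `Y × Y`, so each such condition
is weak-* open, and graph joinings form a countable intersection of open sets.
-/

open MeasureTheory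

noncomputable section

/-- The space `M` of Borel probability measures on `Y × Y` (with the weak-* topology) whose
two marginals are equal to each other and good. -/
def SelfJoiningSpace : Type :=
  {η : ProbabilityMeasure (AddCircle (1 : ℝ) × AddCircle (1 : ℝ)) //
    η.toMeasure.map Prod.fst = η.toMeasure.map Prod.snd ∧
    IsGoodMeasure (η.toMeasure.map Prod.fst)}

instance : TopologicalSpace SelfJoiningSpace :=
  instTopologicalSpaceSubtype

/-- `η` (with common good marginal `μ`) is a *graph joining* if there is a Borel
`μ`-preserving map `R : Y → Y` such that `η(A × B) = μ(A ∩ R⁻¹(B))` for all Borel `A, B`. -/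
def IsGraphJoining (η : SelfJoiningSpace) : Prop :=
  ∃ R : AddCircle (1 : ℝ) → AddCircle (1 : ℝ), Measurable R ∧
    (∀ B : Set (AddCircle (1 : ℝ)), MeasurableSet B →
      (η.1.toMeasure.map Prod.fst) (R ⁻¹' B) = (η.1.toMeasure.map Prod.fst) B) ∧
    ∀ A B : Set (AddCircle (1 : ℝ)), MeasurableSet A → MeasurableSet B →
      η.1.toMeasure (A ×ˢ B) = (η.1.toMeasure.map Prod.fst) (A ∩ R ⁻¹' B)

open Filter Topology ENNReal NNReal BoundedContinuousFunction TopologicalSpace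

lemma measurable_prodMk_graph {X Y : Type*} [MeasurableSpace X] [MeasurableSpace Y] {R : X → Y}
    (hR : Measurable R) : Measurable fun x => (x, R x) :=
  measurable_id.prodMk hR

namespace MeasureTheory.Measure

variable {X Y : Type*} [MeasurableSpace X] [MeasurableSpace Y]

lemma map_prodMk_apply_prod (μ : Measure X) {R : X → Y} (hR : Measurable R) {A : Set X}
    {B : Set Y} (hA : MeasurableSet A) (hB : MeasurableSet B) :
    μ.map (fun x => (x, R x)) (A ×ˢ B) = μ (A ∩ R ⁻¹' B) := by
  rw [map_apply (measurable_prodMk_graph hR) (hA.prod hB)]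
  rfl

lemma map_prodMk_map_snd (μ : Measure X) {R : X → Y} (hR : Measurable R) :
    (μ.map fun x => (x, R x)).map Prod.snd = μ.map R := by
  rw [map_map measurable_snd (measurable_prodMk_graph hR)]
  rfl

lemma eq_map_prodMk_of_ae_eq {η : Measure (X × Y)} {R : X → Y} (hR : Measurable R)
    (h : ∀ᵐ p ∂η, R p.1 = p.2) : η = (η.map Prod.fst).map fun x => (x, R x) := by
  rw [map_map (measurable_prodMk_graph hR) measurable_fst]
  conv_lhs => rw [← map_id (μ := η)]
  refine map_congr ?_
  filter_upwards [h] with p hp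
  simp [hp]

end MeasureTheory.Measure

lemma ae_tendsto_of_tsum_lintegral_edist_ne_top {α E : Type*} [MeasurableSpace α]
    [PseudoEMetricSpace E] {μ : Measure α} {f : α → E} {g : ℕ → α → E}
    (hm : ∀ k, AEMeasurable (fun x => edist (g k x) (f x)) μ)
    (h : ∑' k, ∫⁻ x, edist (g k x) (f x) ∂μ ≠ ∞) :
    ∀ᵐ x ∂μ, Tendsto (g · x) atTop (𝓝 (f x)) := by
  rw [← lintegral_tsum hm] at h
  filter_upwards [ae_lt_top' (AEMeasurable.tsum hm) h] with x hx
  exact tendsto_iff_edist_tendsto_0.2 (ENNReal.tendsto_atTop_zero_of_tsum_ne_top hx.ne)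

section NearContinuousGraph

variable {X Y E : Type*} [TopologicalSpace X] [MeasurableSpace X] [MeasurableSpace Y]
  [NormedAddCommGroup E]

def nearContinuousGraph (e : Y → E) (ε : ℝ≥0∞) : Set (ProbabilityMeasure (X × Y)) :=
  {η | ∃ g : X →ᵇ E, ∫⁻ p, edist (g p.1) (e p.2) ∂η.toMeasure < ε}

lemma isOpen_nearContinuousGraph [TopologicalSpace Y] [CompactSpace X] [CompactSpace Y]
    [OpensMeasurableSpace (X × Y)] {e : Y → E} (he : Continuous e) (ε : ℝ≥0∞) :
    IsOpen (nearContinuousGraph (X := X) e ε) := by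
  simp only [nearContinuousGraph, Set.ofPred_exists, edist_nndist]
  exact isOpen_iUnion fun g => isOpen_lt
    (ProbabilityMeasure.continuous_lintegral_continuousMap
      (⟨fun p => nndist (g p.1) (e p.2), by fun_prop⟩ : C(X × Y, ℝ≥0)))
    continuous_const

lemma map_prodMk_mem_nearContinuousGraph [PseudoMetrizableSpace X] [BorelSpace X]
    [TopologicalSpace Y] [CompactSpace Y] [OpensMeasurableSpace Y] [NormedSpace ℝ E]
    [MeasurableSpace E] [BorelSpace E] [SecondCountableTopology E] {e : Y → E} (he : Continuous e)
    {η : ProbabilityMeasure (X × Y)} {R : X → Y} (hR : Measurable R)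
    (hη : η.toMeasure = (η.toMeasure.map Prod.fst).map fun x => (x, R x))
    {ε : ℝ≥0∞} (hε : 0 < ε) : η ∈ nearContinuousGraph e ε := by
  set μ := η.toMeasure.map Prod.fst
  have : IsProbabilityMeasure μ := Measure.isProbabilityMeasure_map measurable_fst.aemeasurable
  obtain ⟨δ, hδ, hδε⟩ := exists_between hε
  have heR : Integrable (e ∘ R) μ :=
    ((BoundedContinuousFunction.mkOfCompact ⟨e, he⟩).integrable (μ.map R)).comp_measurable hR
  obtain ⟨g, hg, -⟩ := heR.exists_boundedContinuous_lintegral_sub_le hδ.ne'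
  have hm : Measurable fun p : X × Y => edist (g p.1) (e p.2) :=
    (g.continuous.measurable.comp measurable_fst).edist (he.measurable.comp measurable_snd)
  refine ⟨g, ?_⟩
  rw [hη, lintegral_map hm (measurable_prodMk_graph hR)]
  calc ∫⁻ x, edist (g x) (e (R x)) ∂μ = ∫⁻ x, ‖e (R x) - g x‖ₑ ∂μ := by
        simp [edist_eq_enorm_sub, enorm_sub_rev]
    _ ≤ δ := hg
    _ < ε := hδε

lemma exists_eq_map_prodMk_of_forall_mem_nearContinuousGraph [Nonempty Y]
    [OpensMeasurableSpace X] [CompleteSpace E] [MeasurableSpace E]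
    [BorelSpace E] [SecondCountableTopology E] {e : Y → E} (he : MeasurableEmbedding e)
    {η : ProbabilityMeasure (X × Y)} (h : ∀ k : ℕ, η ∈ nearContinuousGraph e (2⁻¹ ^ k)) :
    ∃ R : X → Y, Measurable R ∧
      η.toMeasure = (η.toMeasure.map Prod.fst).map fun x => (x, R x) := by
  choose g hg using h
  have hmeas (k : ℕ) : Measurable fun p : X × Y => edist (g k p.1) (e p.2) :=
    ((g k).continuous.measurable.comp measurable_fst).edist (he.measurable.comp measurable_snd)
  have hsum : ∑' k, ∫⁻ p, edist (g k p.1) (e p.2) ∂η.toMeasure ≠ ∞ :=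
    ne_top_of_le_ne_top (by simp [ENNReal.tsum_geometric]) (ENNReal.tsum_le_tsum fun k => (hg k).le)
  have hconv := ae_tendsto_of_tsum_lintegral_edist_ne_top (fun k => (hmeas k).aemeasurable) hsum
  let f : X → E := fun x => limUnder atTop (g · x)
  have hf : Measurable f :=
    (StronglyMeasurable.limUnder fun k => (g k).continuous.stronglyMeasurable).measurable
  obtain ⟨ψ, hψ, hψe⟩ := he.exists_measurable_extend measurable_id fun _ => inferInstance
  refine ⟨ψ ∘ f, hψ.comp hf, Measure.eq_map_prodMk_of_ae_eq (hψ.comp hf) ?_⟩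
  filter_upwards [hconv] with p hp
  exact (congrArg ψ hp.limUnder_eq).trans (congrFun hψe p.2)

end NearContinuousGraph

lemma AddCircle.isClosedEmbedding_coe_toCircle {T : ℝ} [Fact (0 < T)] :
    Topology.IsClosedEmbedding fun y : AddCircle T => (AddCircle.toCircle y : ℂ) :=
  (continuous_subtype_val.comp AddCircle.continuous_toCircle).isClosedEmbedding
    (Circle.coe_injective.comp (AddCircle.injective_toCircle (Fact.out : 0 < T).ne'))

lemma isGraphJoining_iff_exists_eq_map_prodMk (η : SelfJoiningSpace) :
    IsGraphJoining η ↔ ∃ R : AddCircle (1 : ℝ) → AddCircle (1 : ℝ), Measurable R ∧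
      η.1.toMeasure = (η.1.toMeasure.map Prod.fst).map fun x => (x, R x) := by
  constructor
  · rintro ⟨R, hR, -, hprod⟩
    exact ⟨R, hR, Measure.ext_prod fun hA hB => by
      rw [hprod _ _ hA hB, Measure.map_prodMk_apply_prod _ hR hA hB]⟩
  · rintro ⟨R, hR, hη⟩
    refine ⟨R, hR, fun B hB => ?_, fun A B hA hB => ?_⟩
    · rw [← Measure.map_apply hR hB, ← Measure.map_prodMk_map_snd _ hR, ← hη, ← η.2.1]
    · rw [← Measure.map_prodMk_apply_prod _ hR hA hB, ← hη]

/-- In the space `M` of probability measures on `Y × Y` with equal good marginals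
(weak-* subspace topology), the graph joinings form a `Gδ` subset. -/
theorem graph_joinings_Gδ : IsGδ {η : SelfJoiningSpace | IsGraphJoining η} := by
  set e : AddCircle (1 : ℝ) → ℂ := fun y => AddCircle.toCircle y
  have he : IsClosedEmbedding e := AddCircle.isClosedEmbedding_coe_toCircle
  have hset : {η : SelfJoiningSpace | IsGraphJoining η} =
      ⋂ k : ℕ, {η : SelfJoiningSpace | η.1 ∈ nearContinuousGraph e (2⁻¹ ^ k)} := by
    ext η
    simp only [Set.mem_ofPred_eq, Set.mem_iInter, isGraphJoining_iff_exists_eq_map_prodMk]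
    constructor
    · rintro ⟨R, hR, hη⟩ k
      exact map_prodMk_mem_nearContinuousGraph he.continuous hR hη (ENNReal.pow_pos (by simp) k)
    · exact exists_eq_map_prodMk_of_forall_mem_nearContinuousGraph he.measurableEmbedding
  rw [hset]
  exact .iInter fun k =>
    ((isOpen_nearContinuousGraph he.continuous _).preimage continuous_subtype_val).isGδ
end
end
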